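/- Let σ > 0, A > 0, and B be real with 2B + σ² > 0, and set α = √(2B + σ²)/σ; assume α is not an integer. Let c₁, c₂ ≥ 0, not both zero, and suppose y(x) = √x ( c₁ I_α(√(2Ax)/σ) + c₂ I_{−α}(√(2Ax)/σ) ) satisfies y(x) > 0 for all x > 0. Define f(x) = 2σ x y'(x)/y(x) and F(x) = 2σ ln y(x). Then: (i) f satisfies the Riccati equation σ x f'(x) − σ f(x) + (1/2) f(x)² = Ax + B for all x > 0; and (ii) for every μ ≥ 0, setting ν = √(2B + σ² + 4μσ)/σ and assuming ν is not an integer, the function u₀^μ(x) = √x e^{−F(x)/(2σ)} ( c₁ I_ν(√(2Ax)/σ) + c₂ I_{−ν}(√(2Ax)/σ) ) satisfies σ x (u₀^μ)''(x) + f(x) (u₀^μ)'(x) − (μ/x) u₀^μ(x) = 0 for all x > 0, and u₀^0(x) = 1 for all x > 0. -/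

import Mathlib

/-!
With `κ = √(2A)/σ`, the function `w(x) = √x I_ν(κ√x)` is the generalized power series
`∑ aₖ x^(k + (ν+1)/2)`, and the recurrence `aₖ₊₁ (k+1)(k+1+ν) = (κ/2)² aₖ` of its coefficients is
exactly the equation `x² w'' = ((κ/2)² x + (ν² - 1)/4) w`; it depends on `ν` only through `ν²`, so
`y = √x (c₁ I_α + c₂ I_{-α})` solves it as well. For any solution of `x² y'' = q y`, the drift
`f = 2σ x y'/y` satisfies `σ x f' - σ f + f²/2 = 2σ² q`, which is `Ax + B` for `ν = α`.
Finally `e^{-F/(2σ)} = 1/y`, so `u₀ = Y/y` with `Y` a solution for the potential `q + μ/σ`, and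
for such a quotient `σ x u'' + f u' = σ x (Y'' y - Y y'')/y² = μ u / x`.
-/

open Real MeasureTheory

/-- The modified Bessel function of the first kind,
`I_ν(z) = ∑_{k=0}^∞ (z/2)^{2k+ν} / (k! Γ(k+ν+1))`. -/
noncomputable def besselI (ν z : ℝ) : ℝ :=
  ∑' k : ℕ, (z / 2) ^ (2 * (k : ℝ) + ν) / ((Nat.factorial k : ℝ) * Real.Gamma ((k : ℝ) + ν + 1))

open Filter Topology

def EntireCoeffs (b : ℕ → ℝ) : Prop :=
  ∀ R : ℝ, 0 < R → Summable fun k => |b k| * R ^ k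

theorem EntireCoeffs.mul_natCast_add {b : ℕ → ℝ} (hb : EntireCoeffs b) (e : ℝ) :
    EntireCoeffs fun k => b k * (k + e) := by
  intro R hR
  refine Summable.of_nonneg_of_le (fun k => by positivity) (fun k => ?_)
    ((hb (2 * R) (by positivity)).mul_left (|e| + 1))
  have h2k : (k : ℝ) + 1 ≤ 2 ^ k := by exact_mod_cast Nat.lt_two_pow_self
  have hke : |(k : ℝ) + e| ≤ (|e| + 1) * 2 ^ k := by
    calc |(k : ℝ) + e| ≤ k + |e| := (abs_add_le _ _).trans_eq (by rw [Nat.abs_cast])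
      _ ≤ (|e| + 1) * 2 ^ k := by nlinarith [abs_nonneg e]
  calc |b k * (k + e)| * R ^ k = |b k| * |(k : ℝ) + e| * R ^ k := by rw [abs_mul]
    _ ≤ |b k| * ((|e| + 1) * 2 ^ k) * R ^ k := by gcongr
    _ = (|e| + 1) * (|b k| * (2 * R) ^ k) := by rw [mul_pow]; ring

theorem entireCoeffs_of_succ_mul {b : ℕ → ℝ} {c ν : ℝ}
    (h : ∀ k : ℕ, b (k + 1) * ((k + 1) * (k + 1 + ν)) = c * b k) : EntireCoeffs b := by
  intro R hR
  refine summable_of_ratio_norm_eventually_le (r := 1 / 2) (by norm_num) ?_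
  filter_upwards [eventually_ge_atTop ⌈|ν| + 2 * |c| * R⌉₊] with k hk
  have hk' : |ν| + 2 * |c| * R ≤ k := Nat.ceil_le.mp hk
  set P : ℝ := (k + 1) * |k + 1 + ν|
  have hP : k + 1 ≤ P := by
    have : 1 ≤ |(k : ℝ) + 1 + ν| :=
      le_abs.mpr (Or.inl (by linarith [neg_abs_le ν, mul_nonneg (abs_nonneg c) hR.le]))
    nlinarith
  have hrec : |b (k + 1)| * P = |c| * |b k| := by
    have := congrArg abs (h k)
    rwa [abs_mul, abs_mul, abs_of_pos (by positivity : (0 : ℝ) < k + 1), abs_mul] at this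
  have hstep : 2 * R * |b (k + 1)| ≤ |b k| := by
    refine le_of_mul_le_mul_right ?_ (by linarith : 0 < P)
    calc 2 * R * |b (k + 1)| * P = 2 * |c| * R * |b k| := by rw [mul_assoc, hrec]; ring
      _ ≤ |b k| * P := by rw [mul_comm _ P]; gcongr; linarith [abs_nonneg ν]
  rw [Real.norm_of_nonneg (by positivity), Real.norm_of_nonneg (by positivity), pow_succ]
  nlinarith [pow_pos hR k]

theorem rpow_le_max_rpow {a b u : ℝ} (p : ℝ) (ha : 0 < a) (hau : a ≤ u) (hub : u ≤ b) :
    u ^ p ≤ max (a ^ p) (b ^ p) := by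
  rcases le_or_gt 0 p with hp | hp
  · exact (Real.rpow_le_rpow (by linarith) hub hp).trans (le_max_right _ _)
  · exact (Real.rpow_le_rpow_of_nonpos ha hau hp.le).trans (le_max_left _ _)

noncomputable def rpowSeries (b : ℕ → ℝ) (e x : ℝ) : ℝ :=
  ∑' k : ℕ, b k * x ^ ((k : ℝ) + e)

section rpowSeries

variable {b : ℕ → ℝ} {x : ℝ}

theorem summable_rpowSeries (hb : EntireCoeffs b) (e : ℝ) (hx : 0 < x) :
    Summable fun k => b k * x ^ ((k : ℝ) + e) := by
  refine .of_norm_bounded ((hb x hx).mul_right (x ^ e)) (fun k => ?_)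
  rw [Real.rpow_add hx, Real.rpow_natCast, norm_mul, Real.norm_eq_abs, Real.norm_of_nonneg
    (by positivity), mul_assoc]

theorem hasDerivAt_rpowSeries (hb : EntireCoeffs b) (e : ℝ) (hx : 0 < x) :
    HasDerivAt (rpowSeries b e) (rpowSeries (fun k => b k * (k + e)) (e - 1) x) x := by
  set C := max ((x / 2) ^ (e - 1)) ((2 * x) ^ (e - 1))
  have hmem : x ∈ Set.Ioo (x / 2) (2 * x) := ⟨by linarith, by linarith⟩
  refine hasDerivAt_tsum_of_isPreconnected
    (g := fun k u => b k * u ^ ((k : ℝ) + e))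
    (g' := fun k u => b k * (k + e) * u ^ ((k : ℝ) + (e - 1)))
    (((hb.mul_natCast_add e) (2 * x) (by linarith)).mul_right C)
    isOpen_Ioo isPreconnected_Ioo (fun k u hu => ?_) (fun k u hu => ?_) hmem
    (summable_rpowSeries hb e hx) hmem
  · have hu0 : 0 < u := by linarith [hu.1]
    exact ((Real.hasDerivAt_rpow_const (Or.inl hu0.ne')).const_mul (b k)).congr_deriv
      (by rw [add_sub_assoc]; ring)
  · have hu0 : 0 < u := by linarith [hu.1]
    rw [norm_mul, Real.norm_eq_abs, Real.norm_of_nonneg (by positivity), Real.rpow_add hu0,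
      Real.rpow_natCast, mul_assoc]
    gcongr
    · exact hu.2.le
    · exact rpow_le_max_rpow _ (by linarith) hu.1.le hu.2.le

theorem rpowSeries_ode {a : ℕ → ℝ} {c ν : ℝ}
    (ha : ∀ k : ℕ, a (k + 1) * ((k + 1) * (k + 1 + ν)) = c * a k) (hx : 0 < x) :
    x ^ 2 * rpowSeries (fun k => a k * (k + (ν + 1) / 2) * (k + ((ν + 1) / 2 - 1)))
        ((ν + 1) / 2 - 1 - 1) x = (c * x + (ν ^ 2 - 1) / 4) * rpowSeries a ((ν + 1) / 2) x := by
  -- For `e = (ν + 1)/2`, `(k + e)(k + e - 1) = k (k + ν) + (ν² - 1)/4`, and the recurrence shifts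
  -- the `k (k + ν)` part, whose `k = 0` term vanishes, onto `c x ∑ aₖ x^(k+e)`.
  set g : ℕ → ℝ := fun k => a k * k * (k + ν) * x ^ ((k : ℝ) + (ν + 1) / 2)
  have hW := summable_rpowSeries (entireCoeffs_of_succ_mul ha) ((ν + 1) / 2) hx
  have hg_succ : ∀ k : ℕ, g (k + 1) = c * x * (a k * x ^ ((k : ℝ) + (ν + 1) / 2)) := by
    intro k
    simp only [g]
    rw [Nat.cast_succ, show (k : ℝ) + 1 + (ν + 1) / 2 = k + (ν + 1) / 2 + 1 by ring,
      Real.rpow_add_one hx.ne']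
    linear_combination (x * x ^ ((k : ℝ) + (ν + 1) / 2)) * ha k
  have hg_shift : Summable fun k => g (k + 1) := by
    simp_rw [hg_succ]
    exact hW.mul_left _
  have hg_sum : ∑' k, g k = c * x * rpowSeries a ((ν + 1) / 2) x := by
    rw [tsum_eq_zero_add' hg_shift, tsum_congr hg_succ, tsum_mul_left]
    simp [g, rpowSeries]
  have hterm : ∀ k : ℕ, x ^ 2 * (a k * (k + (ν + 1) / 2) * (k + ((ν + 1) / 2 - 1)) *
      x ^ ((k : ℝ) + ((ν + 1) / 2 - 1 - 1))) =
      g k + (ν ^ 2 - 1) / 4 * (a k * x ^ ((k : ℝ) + (ν + 1) / 2)) := by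
    intro k
    have hpow : x ^ ((k : ℝ) + (ν + 1) / 2) = x ^ 2 * x ^ ((k : ℝ) + ((ν + 1) / 2 - 1 - 1)) := by
      rw [← Real.rpow_two, ← Real.rpow_add hx]
      ring_nf
    simp only [g]
    rw [hpow]
    ring
  rw [rpowSeries, ← tsum_mul_left, tsum_congr hterm,
    ((summable_nat_add_iff 1).mp hg_shift).tsum_add (hW.mul_left _), tsum_mul_left, hg_sum,
    rpowSeries]
  ring

end rpowSeries

noncomputable def besselCoeff (ν κ : ℝ) (k : ℕ) : ℝ :=
  (κ / 2) ^ (2 * (k : ℝ) + ν) / ((k.factorial : ℝ) * Real.Gamma (k + ν + 1))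

-- `ν` may be an integer: at the poles of `Γ`, Mathlib's `Gamma` is `0`, which (with `x / 0 = 0`)
-- gives the true value `0` of `1/Γ` there.
theorem besselCoeff_succ_mul (ν : ℝ) {κ : ℝ} (hκ : 0 < κ) (k : ℕ) :
    besselCoeff ν κ (k + 1) * ((k + 1) * (k + 1 + ν)) = (κ / 2) ^ 2 * besselCoeff ν κ k := by
  by_cases hs : (k : ℝ) + ν + 1 = 0
  · simp [besselCoeff, hs, show (k : ℝ) + 1 + ν = 0 by linarith]
  have hΓ : Real.Gamma ((k + 1 : ℕ) + ν + 1) = (k + ν + 1) * Real.Gamma (k + ν + 1) := by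
    rw [Nat.cast_succ, show (k : ℝ) + 1 + ν + 1 = k + ν + 1 + 1 by ring, Real.Gamma_add_one hs]
  have hpow :
      (κ / 2) ^ (2 * ((k + 1 : ℕ) : ℝ) + ν) = (κ / 2) ^ 2 * (κ / 2) ^ (2 * (k : ℝ) + ν) := by
    rw [Nat.cast_succ, show 2 * ((k : ℝ) + 1) + ν = 2 + (2 * k + ν) by ring,
      Real.rpow_add (by positivity), Real.rpow_two]
  rw [besselCoeff, besselCoeff, hΓ, hpow, Nat.factorial_succ, Nat.cast_mul, Nat.cast_succ]
  rcases eq_or_ne (Real.Gamma (k + ν + 1)) 0 with hΓ0 | hΓ0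
  · simp [hΓ0]
  · field_simp
    ring

theorem sqrt_mul_besselI_eq_rpowSeries (ν : ℝ) {κ x : ℝ} (hκ : 0 < κ) (hx : 0 < x) :
    √x * besselI ν (κ * √x) = rpowSeries (besselCoeff ν κ) ((ν + 1) / 2) x := by
  rw [besselI, rpowSeries, ← tsum_mul_left]
  refine tsum_congr fun k => ?_
  have hpow : √x * (κ * √x / 2) ^ (2 * (k : ℝ) + ν) =
      (κ / 2) ^ (2 * (k : ℝ) + ν) * x ^ ((k : ℝ) + (ν + 1) / 2) := by
    rw [mul_div_right_comm, Real.mul_rpow (by positivity) (Real.sqrt_nonneg x),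
      Real.sqrt_eq_rpow, ← Real.rpow_mul hx.le, mul_left_comm, ← Real.rpow_add hx]
    ring_nf
  rw [besselCoeff, div_mul_eq_mul_div, ← mul_div_assoc, hpow]

def SolvesODE (q y : ℝ → ℝ) : Prop :=
  ∀ x > 0, DifferentiableAt ℝ y x ∧ DifferentiableAt ℝ (deriv y) x ∧
    x ^ 2 * deriv (deriv y) x = q x * y x

theorem SolvesODE.of_hasDerivAt {q y y' y'' : ℝ → ℝ} (hy : ∀ x > 0, HasDerivAt y (y' x) x)
    (hy' : ∀ x > 0, HasDerivAt y' (y'' x) x) (hode : ∀ x > 0, x ^ 2 * y'' x = q x * y x) :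
    SolvesODE q y := by
  intro x hx
  have hderiv : deriv y =ᶠ[𝓝 x] y' :=
    eventually_of_mem (Ioi_mem_nhds hx) fun t ht => (hy t ht).deriv
  refine ⟨(hy x hx).differentiableAt, ?_, ?_⟩
  · exact (hy' x hx).differentiableAt.congr_of_eventuallyEq hderiv
  · rw [hderiv.deriv_eq, (hy' x hx).deriv, hode x hx]

theorem SolvesODE.mul_add_mul {q y₁ y₂ : ℝ → ℝ} (h₁ : SolvesODE q y₁) (h₂ : SolvesODE q y₂)
    (c₁ c₂ : ℝ) : SolvesODE q fun x => c₁ * y₁ x + c₂ * y₂ x := by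
  refine .of_hasDerivAt (y' := fun x => c₁ * deriv y₁ x + c₂ * deriv y₂ x)
    (y'' := fun x => c₁ * deriv (deriv y₁) x + c₂ * deriv (deriv y₂) x)
    (fun x hx => ?_) (fun x hx => ?_) (fun x hx => ?_)
  · exact ((h₁ x hx).1.hasDerivAt.const_mul c₁).add ((h₂ x hx).1.hasDerivAt.const_mul c₂)
  · exact ((h₁ x hx).2.1.hasDerivAt.const_mul c₁).add ((h₂ x hx).2.1.hasDerivAt.const_mul c₂)
  · linear_combination c₁ * (h₁ x hx).2.2 + c₂ * (h₂ x hx).2.2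

theorem solvesODE_sqrt_mul_besselI (ν : ℝ) {κ : ℝ} (hκ : 0 < κ) :
    SolvesODE (fun x => (κ / 2) ^ 2 * x + (ν ^ 2 - 1) / 4) fun x => √x * besselI ν (κ * √x) := by
  have hrec := besselCoeff_succ_mul ν hκ
  have hb := entireCoeffs_of_succ_mul hrec
  refine .of_hasDerivAt (fun x hx => ?_)
    (fun x hx => hasDerivAt_rpowSeries (hb.mul_natCast_add ((ν + 1) / 2)) ((ν + 1) / 2 - 1) hx)
    (fun x hx => ?_)
  · exact (hasDerivAt_rpowSeries hb ((ν + 1) / 2) hx).congr_of_eventuallyEq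
      (eventually_of_mem (Ioi_mem_nhds hx) fun t ht => sqrt_mul_besselI_eq_rpowSeries ν hκ ht)
  · rw [sqrt_mul_besselI_eq_rpowSeries ν hκ hx]
    exact rpowSeries_ode hrec hx

theorem solvesODE_sqrt_mul_besselI_add (ν c₁ c₂ : ℝ) {κ : ℝ} (hκ : 0 < κ) :
    SolvesODE (fun x => (κ / 2) ^ 2 * x + (ν ^ 2 - 1) / 4)
      fun x => √x * (c₁ * besselI ν (κ * √x) + c₂ * besselI (-ν) (κ * √x)) := by
  have h := (solvesODE_sqrt_mul_besselI ν hκ).mul_add_mul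
    (by simpa only [neg_sq] using solvesODE_sqrt_mul_besselI (-ν) hκ) c₁ c₂
  convert h using 2 with x
  ring

noncomputable def drift (σ : ℝ) (y : ℝ → ℝ) (x : ℝ) : ℝ := 2 * σ * x * deriv y x / y x

theorem SolvesODE.riccati_drift {q y : ℝ → ℝ} (hy : SolvesODE q y) (σ : ℝ) {x : ℝ} (hx : 0 < x)
    (hyx : y x ≠ 0) :
    σ * x * deriv (drift σ y) x - σ * drift σ y x + 1 / 2 * drift σ y x ^ 2 = 2 * σ ^ 2 * q x := by
  obtain ⟨hy₁, hy₂, hode⟩ := hy x hx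
  have hd : HasDerivAt (drift σ y) (((2 * σ * deriv y x + 2 * σ * x * deriv (deriv y) x) * y x
      - 2 * σ * x * deriv y x * deriv y x) / y x ^ 2) x :=
    ((((hasDerivAt_id' x).const_mul (2 * σ)).mul hy₂.hasDerivAt).div hy₁.hasDerivAt
      hyx).congr_deriv (by simp only [Pi.mul_apply]; ring)
  have hy'' : deriv (deriv y) x = q x * y x / x ^ 2 := by
    rw [eq_div_iff (by positivity), mul_comm, hode]
  rw [hd.deriv, drift, hy'']
  field_simp
  ring

theorem SolvesODE.stationary_div {q r y Y : ℝ → ℝ} (hy : SolvesODE q y) (hY : SolvesODE r Y)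
    (hpos : ∀ t > 0, y t ≠ 0) {σ μ x : ℝ} (hσ : σ ≠ 0) (hx : 0 < x) (hrq : r x = q x + μ / σ) :
    σ * x * deriv (deriv fun t => Y t / y t) x + drift σ y x * deriv (fun t => Y t / y t) x
      - μ / x * (Y x / y x) = 0 := by
  have hu : ∀ᶠ t in 𝓝 x, HasDerivAt (fun t => Y t / y t)
      ((deriv Y t * y t - Y t * deriv y t) / y t ^ 2) t :=
    eventually_of_mem (Ioi_mem_nhds hx) fun t ht =>
      (hY t ht).1.hasDerivAt.div (hy t ht).1.hasDerivAt (hpos t ht)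
  obtain ⟨hy₁, hy₂, hode_y⟩ := hy x hx
  obtain ⟨hY₁, hY₂, hode_Y⟩ := hY x hx
  have hu' : HasDerivAt (fun t => (deriv Y t * y t - Y t * deriv y t) / y t ^ 2)
      (((deriv (deriv Y) x * y x - Y x * deriv (deriv y) x) * y x ^ 2
        - (deriv Y x * y x - Y x * deriv y x) * (2 * y x * deriv y x)) / (y x ^ 2) ^ 2) x :=
    (((hY₂.hasDerivAt.mul hy₁.hasDerivAt).sub (hY₁.hasDerivAt.mul hy₂.hasDerivAt)).div
      (hy₁.hasDerivAt.pow 2) (pow_ne_zero 2 (hpos x hx))).congr_deriv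
      (by simp only [Pi.mul_apply, Pi.sub_apply, Pi.pow_apply]; push_cast; ring)
  have hy'' : deriv (deriv y) x = q x * y x / x ^ 2 := by
    rw [eq_div_iff (by positivity), mul_comm, hode_y]
  have hY'' : deriv (deriv Y) x = r x * Y x / x ^ 2 := by
    rw [eq_div_iff (by positivity), mul_comm, hode_Y]
  have hderiv : deriv (fun t => Y t / y t) =ᶠ[𝓝 x]
      fun t => (deriv Y t * y t - Y t * deriv y t) / y t ^ 2 := hu.mono fun t ht => ht.deriv
  have hyx := hpos x hx
  rw [hderiv.deriv_eq, hu'.deriv, hu.self_of_nhds.deriv, drift, hy'', hY'', hrq]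
  field_simp
  ring

theorem sq_mul_sqrt_div_sq {a : ℝ} (σ : ℝ) (ha : 0 ≤ a) (hσ : σ ≠ 0) :
    σ ^ 2 * (√a / σ) ^ 2 = a := by
  rw [div_pow, sq_sqrt ha]
  field_simp

theorem stmt_12_general (σ A B α : ℝ) (hσ : 0 < σ) (hA : 0 < A) (hB : 0 < 2 * B + σ ^ 2)
    (hα : α = Real.sqrt (2 * B + σ ^ 2) / σ)
    (c₁ c₂ : ℝ)
    (y : ℝ → ℝ)
    (hy : ∀ x, y x = Real.sqrt x * (c₁ * besselI α (Real.sqrt (2 * A * x) / σ)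
        + c₂ * besselI (-α) (Real.sqrt (2 * A * x) / σ)))
    (hypos : ∀ x > (0 : ℝ), 0 < y x)
    (f F : ℝ → ℝ)
    (hf : ∀ x, f x = 2 * σ * x * deriv y x / y x)
    (hF : ∀ x, F x = 2 * σ * Real.log (y x)) :
    (∀ x > (0 : ℝ),
      σ * x * deriv f x - σ * f x + (1 / 2) * (f x) ^ 2 = A * x + B)
    ∧ (∀ μ : ℝ, 0 ≤ μ → ∀ ν : ℝ,
        ν = Real.sqrt (2 * B + σ ^ 2 + 4 * μ * σ) / σ → (∀ n : ℤ, ν ≠ (n : ℝ)) →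
        ∀ u₀ : ℝ → ℝ,
          (∀ x, u₀ x = Real.sqrt x * Real.exp (-F x / (2 * σ))
              * (c₁ * besselI ν (Real.sqrt (2 * A * x) / σ)
                + c₂ * besselI (-ν) (Real.sqrt (2 * A * x) / σ))) →
          (∀ x > (0 : ℝ),
            σ * x * deriv (deriv u₀) x + f x * deriv u₀ x - (μ / x) * u₀ x = 0)
          ∧ (μ = 0 → ∀ x > (0 : ℝ), u₀ x = 1)) := by
  set κ := √(2 * A) / σ
  have hκ : 0 < κ := by positivity
  have hκ2 : σ ^ 2 * κ ^ 2 = 2 * A := sq_mul_sqrt_div_sq σ (by positivity) hσ.ne'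
  have harg : ∀ x, √(2 * A * x) / σ = κ * √x := fun x => by
    rw [sqrt_mul (by positivity)]
    ring
  set W := fun ν x => √x * (c₁ * besselI ν (κ * √x) + c₂ * besselI (-ν) (κ * √x))
  have hyW : y = W α := funext fun x => by rw [hy, harg]
  have hy0 : ∀ x > 0, y x ≠ 0 := fun x hx => (hypos x hx).ne'
  have hsol : SolvesODE (fun x => (κ / 2) ^ 2 * x + (α ^ 2 - 1) / 4) y :=
    hyW ▸ solvesODE_sqrt_mul_besselI_add α c₁ c₂ hκ
  have hα2 : σ ^ 2 * α ^ 2 = 2 * B + σ ^ 2 := by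
    rw [hα]; exact sq_mul_sqrt_div_sq σ hB.le hσ.ne'
  rw [show f = drift σ y from funext hf]
  refine ⟨fun x hx => ?_, fun μ hμ ν hν _ u₀ hu₀ => ?_⟩
  · rw [hsol.riccati_drift σ hx (hy0 x hx)]
    linear_combination x * hκ2 / 2 + hα2 / 2
  have hν2 : σ ^ 2 * ν ^ 2 = 2 * B + σ ^ 2 + 4 * μ * σ := by
    rw [hν]; exact sq_mul_sqrt_div_sq σ (by positivity) hσ.ne'
  have hu : ∀ x > 0, u₀ x = W ν x / y x := fun x hx => by
    rw [hu₀, hF, show -(2 * σ * log (y x)) / (2 * σ) = -log (y x) by field_simp, exp_neg,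
      exp_log (hypos x hx), harg]
    ring
  refine ⟨fun x hx => ?_, fun hμ0 x hx => ?_⟩
  · have hueq : u₀ =ᶠ[𝓝 x] fun t => W ν t / y t :=
      eventually_of_mem (Ioi_mem_nhds hx) hu
    rw [hueq.deriv.deriv_eq, hueq.deriv_eq, hueq.eq_of_nhds]
    refine hsol.stationary_div (solvesODE_sqrt_mul_besselI_add ν c₁ c₂ hκ) hy0 hσ.ne' hx ?_
    have hμσ : μ / σ = (ν ^ 2 - α ^ 2) / 4 := by
      rw [div_eq_iff hσ.ne']
      refine mul_left_cancel₀ hσ.ne' ?_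
      linear_combination (hα2 - hν2) / 4
    rw [hμσ]
    ring
  · have hνα : ν = α := by rw [hν, hα, hμ0]; ring_nf
    rw [hu x hx, hνα, ← hyW]
    exact div_self (hy0 x hx)

/-- Lemma 4.1 and the construction in the proof of Theorem 4.2: the drift
`f = 2σ x y'/y` built from `y(x) = √x (c₁ I_α(√(2Ax)/σ) + c₂ I_{-α}(√(2Ax)/σ))` solves the
Riccati equation `σ x f' - σ f + f²/2 = Ax + B`, and for every `μ ≥ 0` the function
`u₀^μ(x) = √x e^{-F(x)/(2σ)} (c₁ I_ν(√(2Ax)/σ) + c₂ I_{-ν}(√(2Ax)/σ))` is a stationary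
solution of `σ x u'' + f u' - (μ/x) u = 0` with `u₀⁰ = 1`. -/
theorem stmt_12 (σ A B α : ℝ) (hσ : 0 < σ) (hA : 0 < A) (hB : 0 < 2 * B + σ ^ 2)
    (hα : α = Real.sqrt (2 * B + σ ^ 2) / σ) (hαint : ∀ n : ℤ, α ≠ (n : ℝ))
    (c₁ c₂ : ℝ) (hc₁ : 0 ≤ c₁) (hc₂ : 0 ≤ c₂) (hne : ¬(c₁ = 0 ∧ c₂ = 0))
    (y : ℝ → ℝ)
    (hy : ∀ x, y x = Real.sqrt x * (c₁ * besselI α (Real.sqrt (2 * A * x) / σ)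
        + c₂ * besselI (-α) (Real.sqrt (2 * A * x) / σ)))
    (hypos : ∀ x > (0 : ℝ), 0 < y x)
    (f F : ℝ → ℝ)
    (hf : ∀ x, f x = 2 * σ * x * deriv y x / y x)
    (hF : ∀ x, F x = 2 * σ * Real.log (y x)) :
    (∀ x > (0 : ℝ),
      σ * x * deriv f x - σ * f x + (1 / 2) * (f x) ^ 2 = A * x + B)
    ∧ (∀ μ : ℝ, 0 ≤ μ → ∀ ν : ℝ,
        ν = Real.sqrt (2 * B + σ ^ 2 + 4 * μ * σ) / σ → (∀ n : ℤ, ν ≠ (n : ℝ)) →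
        ∀ u₀ : ℝ → ℝ,
          (∀ x, u₀ x = Real.sqrt x * Real.exp (-F x / (2 * σ))
              * (c₁ * besselI ν (Real.sqrt (2 * A * x) / σ)
                + c₂ * besselI (-ν) (Real.sqrt (2 * A * x) / σ))) →
          (∀ x > (0 : ℝ),
            σ * x * deriv (deriv u₀) x + f x * deriv u₀ x - (μ / x) * u₀ x = 0)
          ∧ (μ = 0 → ∀ x > (0 : ℝ), u₀ x = 1)) :=
  stmt_12_general σ A B α hσ hA hB hα c₁ c₂ y hy hypos f F hf hF
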